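/- arXiv:2204.00864 — 3 statements merged into one kernel-verified Lean document; each statement's English description precedes it below -/
import Mathlib

section
/- For bounded operators a, b on H the M,N-norms are submultiplicative in the sense that ‖ab‖_{M,N} ≤ ‖a‖_{M,0} ‖b‖_{M,N} ≤ ‖a‖_{M,N} ‖b‖_{M,N}. -/
open scoped ENNReal ComplexConjugate InnerProductSpace

noncomputable section

abbrev H : Type := lp (fun _ : ℕ => ℂ) 2

/-- The standard orthonormal basis vectors of `ℓ²(ℕ)`. -/
def e (k : ℕ) : H := lp.single 2 k 1

/-- Matrix coefficients of a bounded operator. -/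
def matA (a : H →L[ℂ] H) (k l : ℕ) : ℂ := ⟪e k, a (e l)⟫_ℂ

/-- Operator norm (possibly infinite) of a matrix, as the sup of bilinear pairings
against finitely supported vectors of norm at most one. -/
def opNormE (A : ℕ → ℕ → ℂ) : ℝ≥0∞ :=
  ⨆ (x : ℕ →₀ ℂ) (y : ℕ →₀ ℂ)
    (_ : ∑ l ∈ x.support, ‖x l‖ ^ 2 ≤ 1)
    (_ : ∑ k ∈ y.support, ‖y k‖ ^ 2 ≤ 1),
    ENNReal.ofReal ‖∑ k ∈ y.support, ∑ l ∈ x.support, conj (y k) * A k l * x l‖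

/-- Hilbert-Schmidt norm (possibly infinite) of a matrix. -/
def hsNormE (A : ℕ → ℕ → ℂ) : ℝ≥0∞ :=
  (∑' k : ℕ, ∑' l : ℕ, (‖A k l‖₊ : ℝ≥0∞) ^ 2) ^ ((1 : ℝ) / 2)

/-- The matrix of `a * (I + K)^N`, where `K` is the label operator `K E_k = k E_k`. -/
def wt (N : ℕ) (A : ℕ → ℕ → ℂ) : ℕ → ℕ → ℂ := fun k l => (1 + (l : ℂ)) ^ N * A k l

/-- `‖a‖_{0,N} = ‖a (I+K)^N‖`. -/
def norm0N (A : ℕ → ℕ → ℂ) (N : ℕ) : ℝ≥0∞ := opNormE (wt N A)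

/-- The matrix of `δ_K(a) = [K, a]`. -/
def deltaK (A : ℕ → ℕ → ℂ) : ℕ → ℕ → ℂ := fun k l => ((k : ℂ) - (l : ℂ)) * A k l

/-- `‖a‖_{M,N} = ∑_{j=0}^M C(M,j) ‖δ_K^j(a)‖_{0,N}`. -/
def normMN (A : ℕ → ℕ → ℂ) (M N : ℕ) : ℝ≥0∞ :=
  ∑ j ∈ Finset.range (M + 1), (Nat.choose M j : ℝ≥0∞) * norm0N (deltaK^[j] A) N

/-- Rapid decay of a matrix: the smooth compact operators `K^∞` are the operators
whose matrix has this property. -/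
def IsRD (A : ℕ → ℕ → ℂ) : Prop :=
  ∀ M N : ℕ, ∃ C : ℝ, ∀ k l : ℕ, (1 + (k : ℝ)) ^ M * (1 + (l : ℝ)) ^ N * ‖A k l‖ ≤ C

/-!
Work with matrices. Since `K` is diagonal, `δ_K^j(ab)` has entries `(k - l)^j ∑ₘ aₖₘ bₘₗ`, and
splitting `k - l = (k - m) + (m - l)` gives the Leibniz rule
`δ^j(ab) = ∑ᵢ C(j,i) δ^i(a) δ^{j-i}(b)`, while the weight `(I + K)^N` acts on the column index
and so passes to `b`. A matrix of finite norm has `ℓ²`-bounded rows and columns, so by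
Cauchy–Schwarz the product of two such matrices converges entrywise and its norm is at most the
product of the norms. Finally `C(M,j) C(j,i) ≤ C(M,i) C(M,j-i)` turns the resulting double sum into
`‖a‖_{M,0} ‖b‖_{M,N}`. The second inequality holds because `(1 + l)^N ≥ 1`.
-/

open Finset

def InUnitBall (x : ℕ →₀ ℂ) : Prop := ∑ l ∈ x.support, ‖x l‖ ^ 2 ≤ 1

def pairing (A : ℕ → ℕ → ℂ) (x y : ℕ →₀ ℂ) : ℂ :=
  ∑ k ∈ y.support, ∑ l ∈ x.support, conj (y k) * A k l * x l

-- `∑'` is junk where the series diverges; it converges when both factors have finite `opNormE`.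
def matMul (A B : ℕ → ℕ → ℂ) : ℕ → ℕ → ℂ := fun k l => ∑' m, A k m * B m l

section OpNorm

variable {A : ℕ → ℕ → ℂ}

lemma opNormE_le_iff {c : ℝ≥0∞} :
    opNormE A ≤ c ↔ ∀ x y, InUnitBall x → InUnitBall y → ‖pairing A x y‖ₑ ≤ c := by
  simp only [opNormE, iSup_le_iff, ofReal_norm]
  rfl

lemma enorm_pairing_le_opNormE {x y : ℕ →₀ ℂ} (hx : InUnitBall x) (hy : InUnitBall y) :
    ‖pairing A x y‖ₑ ≤ opNormE A :=
  opNormE_le_iff.mp le_rfl x y hx hy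

lemma norm_pairing_le_toReal_opNormE (hA : opNormE A ≠ ⊤) {x y : ℕ →₀ ℂ}
    (hx : InUnitBall x) (hy : InUnitBall y) : ‖pairing A x y‖ ≤ (opNormE A).toReal := by
  rw [← ENNReal.ofReal_le_iff_le_toReal hA, ofReal_norm]
  exact enorm_pairing_le_opNormE hx hy

lemma pairing_eq_sum_of_support_subset {x y : ℕ →₀ ℂ} {s t : Finset ℕ}
    (hx : x.support ⊆ s) (hy : y.support ⊆ t) :
    pairing A x y = ∑ k ∈ t, ∑ l ∈ s, conj (y k) * A k l * x l := by
  unfold pairing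
  rw [sum_subset hy fun k _ hk => by simp [Finsupp.notMem_support_iff.mp hk]]
  refine sum_congr rfl fun k _ => sum_subset hx fun l _ hl => ?_
  simp [Finsupp.notMem_support_iff.mp hl]

lemma inUnitBall_single (k : ℕ) : InUnitBall (Finsupp.single k 1) := by
  simp [InUnitBall]

lemma pairing_single (k l : ℕ) :
    pairing A (Finsupp.single l 1) (Finsupp.single k 1) = A k l := by
  simp [pairing]

lemma eq_zero_of_opNormE_eq_zero (h : opNormE A = 0) : A = 0 := by
  funext k l
  have := enorm_pairing_le_opNormE (A := A) (inUnitBall_single l) (inUnitBall_single k)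
  rwa [h, nonpos_iff_eq_zero, enorm_eq_zero, pairing_single] at this

lemma opNormE_sum_mul_le {ι : Type*} (s : Finset ι) (c : ι → ℂ) (F : ι → ℕ → ℕ → ℂ) :
    opNormE (fun k l => ∑ i ∈ s, c i * F i k l) ≤ ∑ i ∈ s, ‖c i‖ₑ * opNormE (F i) := by
  refine opNormE_le_iff.mpr fun x y hx hy => ?_
  have hlin : pairing (fun k l => ∑ i ∈ s, c i * F i k l) x y
      = ∑ i ∈ s, c i * pairing (F i) x y := by
    simp only [pairing, mul_sum, sum_mul]
    refine (sum_congr rfl fun k _ => sum_comm.trans ?_).trans sum_comm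
    exact sum_congr rfl fun i _ => sum_congr rfl fun l _ => by ring
  rw [hlin]
  refine (enorm_sum_le s _).trans (sum_le_sum fun i _ => ?_)
  rw [enorm_mul]
  gcongr
  exact enorm_pairing_le_opNormE hx hy

end OpNorm

section Weight

variable {A B : ℕ → ℕ → ℂ}

lemma wt_zero : wt 0 A = A := by
  funext k l; simp [wt]

lemma norm0N_zero : norm0N A 0 = opNormE A := by
  rw [norm0N, wt_zero]

lemma wt_add (N d : ℕ) : wt (N + d) A = wt d (wt N A) := by
  funext k l; simp only [wt]; ring

lemma wt_sum_mul {ι : Type*} (N : ℕ) (s : Finset ι) (c : ι → ℂ) (F : ι → ℕ → ℕ → ℂ) :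
    wt N (fun k l => ∑ i ∈ s, c i * F i k l) = fun k l => ∑ i ∈ s, c i * wt N (F i) k l := by
  funext k l; simp only [wt, mul_sum]; exact sum_congr rfl fun i _ => by ring

lemma wt_matMul (N : ℕ) : wt N (matMul A B) = matMul A (wt N B) := by
  funext k l; simp only [wt, matMul, ← tsum_mul_left]; exact tsum_congr fun m => by ring

lemma one_le_norm_one_add_pow (l N : ℕ) : 1 ≤ ‖(1 + (l : ℂ)) ^ N‖ := by
  rw [norm_pow]
  refine one_le_pow₀ ?_
  rw [show (1 + (l : ℂ)) = ((1 + l : ℕ) : ℂ) by push_cast; ring, Complex.norm_natCast]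
  exact_mod_cast Nat.le_add_right 1 l

lemma one_add_pow_ne_zero (l N : ℕ) : (1 + (l : ℂ)) ^ N ≠ 0 :=
  norm_pos_iff.mp (one_pos.trans_le (one_le_norm_one_add_pow l N))

lemma opNormE_le_opNormE_wt (N : ℕ) : opNormE A ≤ opNormE (wt N A) := by
  refine opNormE_le_iff.mpr fun x y hx hy => ?_
  -- `x = (1 + K)^N x'` with `x'` still in the unit ball
  set x' : ℕ →₀ ℂ := (fun l : ℕ => ((1 + (l : ℂ)) ^ N)⁻¹) • x
  have hx'_apply (l : ℕ) : x' l = ((1 + (l : ℂ)) ^ N)⁻¹ * x l := rfl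
  have hx'x : x'.support ⊆ x.support := fun l hl => by
    simp_all [Finsupp.mem_support_iff]
  have hx' : InUnitBall x' := by
    refine le_trans ?_ hx
    rw [sum_subset hx'x fun l _ hl => by simp [Finsupp.notMem_support_iff.mp hl]]
    refine sum_le_sum fun l _ => pow_le_pow_left₀ (norm_nonneg _) ?_ 2
    rw [hx'_apply, norm_mul, norm_inv]
    exact mul_le_of_le_one_left (norm_nonneg _) (inv_le_one_of_one_le₀ (one_le_norm_one_add_pow l N))
  have hpair : pairing (wt N A) x' y = pairing A x y := by
    rw [pairing_eq_sum_of_support_subset hx'x subset_rfl, pairing]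
    refine sum_congr rfl fun k _ => sum_congr rfl fun l _ => ?_
    rw [wt, hx'_apply]
    field_simp [one_add_pow_ne_zero l N]
  rw [← hpair]
  exact enorm_pairing_le_opNormE hx' hy

lemma norm0N_mono (A : ℕ → ℕ → ℂ) : Monotone (norm0N A) := by
  intro N N' h
  obtain ⟨d, rfl⟩ := Nat.exists_eq_add_of_le h
  rw [norm0N, norm0N, wt_add]
  exact opNormE_le_opNormE_wt d

lemma normMN_mono (A : ℕ → ℕ → ℂ) (M : ℕ) : Monotone (normMN A M) :=
  fun _ _ h => sum_le_sum fun _ _ => mul_le_mul_right (norm0N_mono _ h) _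

end Weight

lemma sum_norm_sq_le_of_forall_norm_sum_mul_le (u : ℕ → ℂ) (C : ℝ)
    (h : ∀ x, InUnitBall x → ‖∑ l ∈ x.support, u l * x l‖ ≤ C) (s : Finset ℕ) :
    ∑ m ∈ s, ‖u m‖ ^ 2 ≤ C ^ 2 := by
  set S := ∑ m ∈ s, ‖u m‖ ^ 2 with hS_def
  rcases (sum_nonneg fun m _ => sq_nonneg ‖u m‖ : 0 ≤ S).eq_or_lt with hS | hS
  · exact hS.symm.le.trans (sq_nonneg C)
  set r := √S
  have hr : 0 < r := Real.sqrt_pos.mpr hS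
  have hrS : r ^ 2 = S := Real.sq_sqrt hS.le
  -- the extremal test vector: the normalised conjugate of `u` on `s`
  set x : ℕ →₀ ℂ := Finsupp.indicator s fun m _ => conj (u m) / r
  have hxs : x.support ⊆ s := Finsupp.support_indicator_subset _ _
  have hx_apply : ∀ m ∈ s, x m = conj (u m) / r := fun m hm => Finsupp.indicator_of_mem hm _
  have hx : InUnitBall x := by
    rw [InUnitBall, sum_subset hxs fun l _ hl => by simp [Finsupp.notMem_support_iff.mp hl],
      sum_congr rfl fun m hm => by rw [hx_apply m hm, norm_div, RCLike.norm_conj,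
        Complex.norm_real, Real.norm_of_nonneg hr.le, div_pow], ← sum_div, hrS, div_self hS.ne']
  have hux : ∑ l ∈ x.support, u l * x l = r := by
    rw [sum_subset hxs fun l _ hl => by simp [Finsupp.notMem_support_iff.mp hl],
      sum_congr rfl fun m hm => by rw [hx_apply m hm, mul_div_assoc', Complex.mul_conj,
        Complex.normSq_eq_norm_sq], ← sum_div]
    have hr0 : (r : ℂ) ≠ 0 := Complex.ofReal_ne_zero.mpr hr.ne'
    rw [div_eq_iff hr0, ← Complex.ofReal_mul, ← sq, hrS]
    push_cast [hS_def]
    rfl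
  have hrC := h x hx
  rw [hux, Complex.norm_real, Real.norm_of_nonneg hr.le] at hrC
  rw [← hrS]
  exact pow_le_pow_left₀ hr.le hrC 2

lemma summable_mul_and_norm_tsum_mul_le {u v : ℕ → ℂ} {C D : ℝ} (hC : 0 ≤ C) (hD : 0 ≤ D)
    (hu : ∀ s : Finset ℕ, ∑ m ∈ s, ‖u m‖ ^ 2 ≤ C ^ 2)
    (hv : ∀ s : Finset ℕ, ∑ m ∈ s, ‖v m‖ ^ 2 ≤ D ^ 2) :
    Summable (fun m => u m * v m) ∧ ‖∑' m, u m * v m‖ ≤ C * D := by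
  have hpartial (s : Finset ℕ) : ∑ m ∈ s, ‖u m * v m‖ ≤ C * D := by
    simp only [norm_mul]
    refine (Real.sum_mul_le_sqrt_mul_sqrt s _ _).trans (mul_le_mul ?_ ?_ (Real.sqrt_nonneg _) hC)
    · exact (Real.sqrt_le_left hC).mpr (hu s)
    · exact (Real.sqrt_le_left hD).mpr (hv s)
  have hsum : Summable fun m => ‖u m * v m‖ := summable_of_sum_le (fun _ => norm_nonneg _) hpartial
  exact ⟨hsum.of_norm, (norm_tsum_le_tsum_norm hsum).trans (hsum.tsum_le_of_sum_le hpartial)⟩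

section MatMul

variable {A B : ℕ → ℕ → ℂ}

lemma sum_norm_sq_vecMul_le (hA : opNormE A ≠ ⊤) {y : ℕ →₀ ℂ} (hy : InUnitBall y)
    (s : Finset ℕ) :
    ∑ m ∈ s, ‖∑ k ∈ y.support, conj (y k) * A k m‖ ^ 2 ≤ (opNormE A).toReal ^ 2 := by
  refine sum_norm_sq_le_of_forall_norm_sum_mul_le _ _ (fun x hx => ?_) s
  have h : ∑ l ∈ x.support, (∑ k ∈ y.support, conj (y k) * A k l) * x l = pairing A x y := by
    simp only [pairing, sum_mul]
    exact sum_comm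
  rw [h]
  exact norm_pairing_le_toReal_opNormE hA hx hy

lemma sum_norm_sq_mulVec_le (hB : opNormE B ≠ ⊤) {x : ℕ →₀ ℂ} (hx : InUnitBall x)
    (s : Finset ℕ) :
    ∑ m ∈ s, ‖∑ l ∈ x.support, B m l * x l‖ ^ 2 ≤ (opNormE B).toReal ^ 2 := by
  have hconj := sum_norm_sq_le_of_forall_norm_sum_mul_le
    (fun m => conj (∑ l ∈ x.support, B m l * x l)) (opNormE B).toReal (fun y hy => ?_) s
  · simpa only [RCLike.norm_conj] using hconj
  have h : ∑ k ∈ y.support, conj (∑ l ∈ x.support, B k l * x l) * y k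
      = conj (pairing B x y) := by
    simp only [pairing, map_sum, map_mul, Complex.conj_conj, sum_mul]
    exact sum_congr rfl fun k _ => sum_congr rfl fun l _ => by ring
  rw [h, RCLike.norm_conj]
  exact norm_pairing_le_toReal_opNormE hB hx hy

lemma summable_mul_of_opNormE_ne_top (hA : opNormE A ≠ ⊤) (hB : opNormE B ≠ ⊤) (k l : ℕ) :
    Summable fun m => A k m * B m l := by
  have hrow := sum_norm_sq_vecMul_le hA (inUnitBall_single k)
  have hcol := sum_norm_sq_mulVec_le hB (inUnitBall_single l)
  simp only [Finsupp.support_single _ one_ne_zero, sum_singleton,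
    Finsupp.single_eq_same, map_one, one_mul, mul_one] at hrow hcol
  exact (summable_mul_and_norm_tsum_mul_le ENNReal.toReal_nonneg ENNReal.toReal_nonneg
    hrow hcol).1

lemma pairing_matMul (hsum : ∀ k l, Summable fun m => A k m * B m l) (x y : ℕ →₀ ℂ) :
    pairing (matMul A B) x y = ∑' m,
      (∑ k ∈ y.support, conj (y k) * A k m) * ∑ l ∈ x.support, B m l * x l := by
  have hterm (k l : ℕ) : conj (y k) * matMul A B k l * x l
      = ∑' m, conj (y k) * A k m * (B m l * x l) := by
    rw [matMul, ← tsum_mul_left, ← tsum_mul_right]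
    exact tsum_congr fun m => by ring
  have hs (k l : ℕ) : Summable fun m => conj (y k) * A k m * (B m l * x l) :=
    ((hsum k l).mul_left (conj (y k) * x l)).congr fun m => by ring
  simp only [pairing, hterm, sum_mul_sum]
  rw [Summable.tsum_finsetSum fun k _ => summable_sum fun l _ => hs k l]
  exact sum_congr rfl fun k _ => (Summable.tsum_finsetSum fun l _ => hs k l).symm

lemma opNormE_matMul_le (hA : opNormE A ≠ ⊤) (hB : opNormE B ≠ ⊤) :
    opNormE (matMul A B) ≤ opNormE A * opNormE B := by
  refine opNormE_le_iff.mpr fun x y hx hy => ?_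
  rw [pairing_matMul (summable_mul_of_opNormE_ne_top hA hB)]
  have h := (summable_mul_and_norm_tsum_mul_le ENNReal.toReal_nonneg ENNReal.toReal_nonneg
    (sum_norm_sq_vecMul_le hA hy) (sum_norm_sq_mulVec_le hB hx)).2
  rw [← ofReal_norm, ← ENNReal.ofReal_toReal hA, ← ENNReal.ofReal_toReal hB,
    ← ENNReal.ofReal_mul ENNReal.toReal_nonneg]
  exact ENNReal.ofReal_le_ofReal h

lemma hasSum_matA_comp (a b : H →L[ℂ] H) (k l : ℕ) :
    HasSum (fun m => matA a k m * matA b m l) (matA (a ∘L b) k l) := by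
  have hb : HasSum (fun m => matA b m l • e m) (b (e l)) := by
    have hcoord (m : ℕ) : matA b m l • e m = lp.single 2 m ((b (e l) : ℕ → ℂ) m) := by
      rw [e, ← lp.single_smul, smul_eq_mul, mul_one, matA, e, lp.inner_single_left]
      simp
    simpa only [hcoord] using lp.hasSum_single (by norm_num) (b (e l))
  have h := ((innerSL ℂ (e k)).comp a).hasSum hb
  simp only [ContinuousLinearMap.comp_apply, map_smul, innerSL_apply_apply] at h
  simpa only [matA, smul_eq_mul, mul_comm, ContinuousLinearMap.comp_apply] using h

lemma matA_comp (a b : H →L[ℂ] H) : matA (a ∘L b) = matMul (matA a) (matA b) := by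
  funext k l
  exact (hasSum_matA_comp a b k l).tsum_eq.symm

end MatMul

section Leibniz

variable {A B : ℕ → ℕ → ℂ}

lemma iterate_deltaK_apply (j k l : ℕ) :
    deltaK^[j] A k l = ((k : ℂ) - l) ^ j * A k l := by
  induction j with
  | zero => simp
  | succ j ih => rw [Function.iterate_succ_apply', deltaK, ih]; ring

lemma iterate_deltaK_matMul (j : ℕ) (hsum : ∀ i ∈ range (j + 1), ∀ k l,
      Summable fun m => deltaK^[i] A k m * deltaK^[j - i] B m l) :
    deltaK^[j] (matMul A B) = fun k l => ∑ i ∈ range (j + 1),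
      (j.choose i : ℂ) * matMul (deltaK^[i] A) (deltaK^[j - i] B) k l := by
  funext k l
  simp only [iterate_deltaK_apply, matMul, ← tsum_mul_left]
  rw [← Summable.tsum_finsetSum fun i hi => ((hsum i hi k l).mul_left _).congr fun m => by
    rw [iterate_deltaK_apply, iterate_deltaK_apply]]
  refine tsum_congr fun m => ?_
  rw [show (k : ℂ) - l = ((k : ℂ) - m) + ((m : ℂ) - l) by ring, add_pow, sum_mul]
  exact sum_congr rfl fun i _ => by ring

lemma norm0N_iterate_deltaK_matMul_le (j N : ℕ)
    (hA : ∀ i ≤ j, norm0N (deltaK^[i] A) 0 ≠ ⊤) (hB : ∀ i ≤ j, norm0N (deltaK^[i] B) N ≠ ⊤) :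
    norm0N (deltaK^[j] (matMul A B)) N ≤ ∑ i ∈ range (j + 1),
      (j.choose i : ℝ≥0∞) * (norm0N (deltaK^[i] A) 0 * norm0N (deltaK^[j - i] B) N) := by
  have hA' (i : ℕ) (hi : i ≤ j) : opNormE (deltaK^[i] A) ≠ ⊤ := norm0N_zero ▸ hA i hi
  have hB' (i : ℕ) (hi : i ≤ j) : opNormE (deltaK^[i] B) ≠ ⊤ :=
    ne_top_of_le_ne_top (hB i hi) (opNormE_le_opNormE_wt N)
  have hsum : ∀ i ∈ range (j + 1), ∀ k l,
      Summable fun m => deltaK^[i] A k m * deltaK^[j - i] B m l := fun i hi =>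
    summable_mul_of_opNormE_ne_top (hA' i (mem_range_succ_iff.mp hi)) (hB' _ (j.sub_le i))
  rw [norm0N, iterate_deltaK_matMul j hsum, wt_sum_mul]
  refine (opNormE_sum_mul_le _ _ _).trans (sum_le_sum fun i hi => ?_)
  rw [wt_matMul, ← ofReal_norm, Complex.norm_natCast, ENNReal.ofReal_natCast, norm0N_zero, norm0N]
  gcongr
  exact opNormE_matMul_le (hA' i (mem_range_succ_iff.mp hi)) (hB (j - i) (j.sub_le i))

end Leibniz

lemma Nat.choose_mul_choose_le {M j i : ℕ} (hij : i ≤ j) :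
    M.choose j * j.choose i ≤ M.choose i * M.choose (j - i) := by
  rw [Nat.choose_mul hij]
  exact Nat.mul_le_mul_left _ (Nat.choose_le_choose _ (M.sub_le i))

lemma sum_choose_mul_sum_choose_mul_le {R : Type*} [CommSemiring R] [PartialOrder R]
    [CanonicallyOrderedAdd R] [IsOrderedRing R] (M : ℕ) (α β : ℕ → R) :
    ∑ j ∈ range (M + 1), (M.choose j : R) *
        ∑ i ∈ range (j + 1), (j.choose i : R) * (α i * β (j - i))
      ≤ (∑ i ∈ range (M + 1), (M.choose i : R) * α i) *
        ∑ i ∈ range (M + 1), (M.choose i : R) * β i := by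
  calc _ = ∑ j ∈ range (M + 1), ∑ i ∈ range (j + 1),
        ((M.choose j * j.choose i : ℕ) : R) * (α i * β (j - i)) := by
        simp only [mul_sum, Nat.cast_mul, mul_assoc]
    _ ≤ ∑ j ∈ range (M + 1), ∑ i ∈ range (j + 1),
        ((M.choose i : R) * α i) * ((M.choose (j - i) : R) * β (j - i)) := by
        refine sum_le_sum fun j _ => sum_le_sum fun i hi => ?_
        calc _ ≤ ((M.choose i * M.choose (j - i) : ℕ) : R) * (α i * β (j - i)) :=
              mul_le_mul_of_nonneg_right
                (Nat.mono_cast (Nat.choose_mul_choose_le (mem_range_succ_iff.mp hi))) zero_le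
          _ = _ := by push_cast; ring
    _ = ∑ i ∈ range (M + 1), ∑ n ∈ range (M + 1 - i),
        ((M.choose i : R) * α i) * ((M.choose n : R) * β n) :=
        sum_range_diag_flip (M + 1) fun i n => ((M.choose i : R) * α i) * ((M.choose n : R) * β n)
    _ ≤ ∑ i ∈ range (M + 1), ∑ n ∈ range (M + 1),
        ((M.choose i : R) * α i) * ((M.choose n : R) * β n) := by
        gcongr with i _
        exact Nat.sub_le _ _
    _ = _ := (sum_mul_sum _ _ _ _).symm

section Norm

variable {A B : ℕ → ℕ → ℂ}

lemma matMul_zero_left (B : ℕ → ℕ → ℂ) : matMul 0 B = 0 := by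
  funext k l; simp [matMul]

lemma matMul_zero_right (A : ℕ → ℕ → ℂ) : matMul A 0 = 0 := by
  funext k l; simp [matMul]

lemma normMN_zero (M N : ℕ) : normMN 0 M N = 0 := by
  have hδ : deltaK (0 : ℕ → ℕ → ℂ) = 0 := by funext k l; simp [deltaK]
  have hwt : wt N (0 : ℕ → ℕ → ℂ) = 0 := by funext k l; simp [wt]
  have hop : opNormE 0 = 0 := nonpos_iff_eq_zero.mp <| opNormE_le_iff.mpr fun x y _ _ => by
    simp [pairing]
  simp [normMN, norm0N, Function.iterate_fixed hδ, hwt, hop]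

lemma eq_zero_of_normMN_eq_zero {M N : ℕ} (h : normMN A M N = 0) : A = 0 := by
  have h0 := (sum_eq_zero_iff.mp h) 0 (mem_range.mpr M.succ_pos)
  rw [Nat.choose_zero_right, Nat.cast_one, one_mul, Function.iterate_zero, id_eq, norm0N] at h0
  funext k l
  have hkl := congrFun (congrFun (eq_zero_of_opNormE_eq_zero h0) k) l
  exact (mul_eq_zero.mp hkl).resolve_left (one_add_pow_ne_zero l N)

lemma norm0N_ne_top_of_normMN_ne_top {M N : ℕ} (h : normMN A M N ≠ ⊤) {j : ℕ} (hj : j ≤ M) :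
    norm0N (deltaK^[j] A) N ≠ ⊤ := by
  intro htop
  refine h (ENNReal.sum_eq_top.mpr ⟨j, mem_range_succ_iff.mpr hj, ?_⟩)
  rw [htop, ENNReal.mul_top]
  exact_mod_cast (Nat.choose_pos hj).ne'

lemma normMN_matMul_le (M N : ℕ) :
    normMN (matMul A B) M N ≤ normMN A M 0 * normMN B M N := by
  -- `⊤ * 0 = 0` in `ℝ≥0∞`, so a vanishing factor has to be treated through `A = 0` or `B = 0`
  rcases eq_or_ne (normMN A M 0) 0 with hA0 | hA0
  · rw [eq_zero_of_normMN_eq_zero hA0, matMul_zero_left, normMN_zero]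
    exact zero_le
  rcases eq_or_ne (normMN B M N) 0 with hB0 | hB0
  · rw [eq_zero_of_normMN_eq_zero hB0, matMul_zero_right, normMN_zero]
    exact zero_le
  rcases eq_or_ne (normMN A M 0) ⊤ with hAt | hAt
  · rw [hAt, ENNReal.top_mul hB0]
    exact le_top
  rcases eq_or_ne (normMN B M N) ⊤ with hBt | hBt
  · rw [hBt, ENNReal.mul_top hA0]
    exact le_top
  calc normMN (matMul A B) M N
      ≤ ∑ j ∈ range (M + 1), (M.choose j : ℝ≥0∞) * ∑ i ∈ range (j + 1),
          (j.choose i : ℝ≥0∞) * (norm0N (deltaK^[i] A) 0 * norm0N (deltaK^[j - i] B) N) := by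
        refine sum_le_sum fun j hj => mul_le_mul_right ?_ _
        have hjM := mem_range_succ_iff.mp hj
        exact norm0N_iterate_deltaK_matMul_le j N
          (fun i hi => norm0N_ne_top_of_normMN_ne_top hAt (hi.trans hjM))
          (fun i hi => norm0N_ne_top_of_normMN_ne_top hBt (hi.trans hjM))
    _ ≤ normMN A M 0 * normMN B M N :=
        sum_choose_mul_sum_choose_mul_le (R := ℝ≥0∞) M (fun i => norm0N (deltaK^[i] A) 0)
          (fun i => norm0N (deltaK^[i] B) N)

end Norm

/-- Submultiplicativity of the `M,N`-norms:
`‖ab‖_{M,N} ≤ ‖a‖_{M,0} ‖b‖_{M,N} ≤ ‖a‖_{M,N} ‖b‖_{M,N}`. -/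
theorem stmt4 (a b : H →L[ℂ] H) (M N : ℕ) :
    normMN (matA (a ∘L b)) M N ≤ normMN (matA a) M 0 * normMN (matA b) M N ∧
    normMN (matA a) M 0 * normMN (matA b) M N ≤ normMN (matA a) M N * normMN (matA b) M N := by
  rw [matA_comp]
  exact ⟨normMN_matMul_le M N, mul_le_mul_left (normMN_mono _ M (Nat.zero_le N)) _⟩
end
end

section
/- For any bounded operator a on H and nonnegative integers M, N, the adjoint satisfies ‖a*‖_{M,N} ≤ ‖a‖_{M+N,N}. -/
open scoped ENNReal ComplexConjugate InnerProductSpace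

noncomputable section

/-! In matrix form `δ_K^j(a*) = (-1)^j δ_K^j(a)*`, and `‖b* (I+K)^N‖ = ‖(I+K)^N b‖`. Expanding the
left weight binomially, `(1 + k)^N = ((k - l) + (1 + l))^N`, turns it into right weights times
powers of `δ_K`, the leftover column factors `(1 + l)^{-i}` having modulus at most one. This gives
`‖δ_K^j(a*)‖_{0,N} ≤ ∑_i C(N,i) ‖δ_K^{i+j}(a)‖_{0,N}`, and Vandermonde's identity
`∑_{i+j=m} C(M,j) C(N,i) = C(M+N,m)` sums these bounds to `‖a‖_{M+N,N}`. -/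

open Finset

def matAdjoint (A : ℕ → ℕ → ℂ) : ℕ → ℕ → ℂ := fun k l => conj (A l k)

def matPairing (A : ℕ → ℕ → ℂ) (x y : ℕ →₀ ℂ) : ℂ :=
  ∑ k ∈ y.support, ∑ l ∈ x.support, conj (y k) * A k l * x l

lemma matPairing_add (A B : ℕ → ℕ → ℂ) (x y : ℕ →₀ ℂ) :
    matPairing (A + B) x y = matPairing A x y + matPairing B x y := by
  simp only [matPairing, Pi.add_apply, mul_add, add_mul, sum_add_distrib]

lemma matPairing_smul (c : ℂ) (A : ℕ → ℕ → ℂ) (x y : ℕ →₀ ℂ) :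
    matPairing (c • A) x y = c * matPairing A x y := by
  simp only [matPairing, Pi.smul_apply, smul_eq_mul, mul_sum]
  exact sum_congr rfl fun _ _ => sum_congr rfl fun _ _ => by ring

lemma matPairing_matAdjoint (A : ℕ → ℕ → ℂ) (x y : ℕ →₀ ℂ) :
    matPairing (matAdjoint A) x y = conj (matPairing A y x) := by
  unfold matPairing
  rw [sum_comm, map_sum]
  refine sum_congr rfl fun l _ => ?_
  rw [map_sum]
  refine sum_congr rfl fun k _ => ?_
  simp only [matAdjoint, map_mul, Complex.conj_conj]
  ring

lemma ofReal_norm_matPairing_le_opNormE (A : ℕ → ℕ → ℂ)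
    {x y : ℕ →₀ ℂ} (hx : ∑ l ∈ x.support, ‖x l‖ ^ 2 ≤ 1) (hy : ∑ k ∈ y.support, ‖y k‖ ^ 2 ≤ 1) :
    ENNReal.ofReal ‖matPairing A x y‖ ≤ opNormE A :=
  le_iSup₂_of_le x y <| le_iSup₂_of_le hx hy le_rfl

lemma opNormE_le {A : ℕ → ℕ → ℂ} {C : ℝ≥0∞}
    (h : ∀ x y : ℕ →₀ ℂ, ∑ l ∈ x.support, ‖x l‖ ^ 2 ≤ 1 →
      ∑ k ∈ y.support, ‖y k‖ ^ 2 ≤ 1 → ENNReal.ofReal ‖matPairing A x y‖ ≤ C) :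
    opNormE A ≤ C :=
  iSup₂_le fun x y => iSup₂_le (h x y)

lemma opNormE_zero : opNormE 0 = 0 :=
  nonpos_iff_eq_zero.1 <| opNormE_le fun _ _ _ _ => by simp [matPairing]

lemma opNormE_add_le (A B : ℕ → ℕ → ℂ) : opNormE (A + B) ≤ opNormE A + opNormE B :=
  opNormE_le fun x y hx hy => calc
    ENNReal.ofReal ‖matPairing (A + B) x y‖
        ≤ ENNReal.ofReal ‖matPairing A x y‖ + ENNReal.ofReal ‖matPairing B x y‖ := by
      rw [matPairing_add, ← ENNReal.ofReal_add (norm_nonneg _) (norm_nonneg _)]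
      exact ENNReal.ofReal_le_ofReal (norm_add_le _ _)
    _ ≤ opNormE A + opNormE B :=
      add_le_add (ofReal_norm_matPairing_le_opNormE A hx hy)
        (ofReal_norm_matPairing_le_opNormE B hx hy)

lemma opNormE_sum_le {ι : Type*} (s : Finset ι) (F : ι → ℕ → ℕ → ℂ) :
    opNormE (∑ i ∈ s, F i) ≤ ∑ i ∈ s, opNormE (F i) :=
  le_sum_of_subadditive opNormE opNormE_zero.le opNormE_add_le s F

lemma opNormE_smul_le (c : ℂ) (A : ℕ → ℕ → ℂ) : opNormE (c • A) ≤ ‖c‖ₑ * opNormE A :=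
  opNormE_le fun x y hx hy => by
    rw [matPairing_smul, norm_mul, ENNReal.ofReal_mul (norm_nonneg c), ofReal_norm]
    exact mul_le_mul_right (ofReal_norm_matPairing_le_opNormE A hx hy) _

lemma opNormE_matAdjoint_le (A : ℕ → ℕ → ℂ) : opNormE (matAdjoint A) ≤ opNormE A :=
  opNormE_le fun x y hx hy => by
    rw [matPairing_matAdjoint, RCLike.norm_conj]
    exact ofReal_norm_matPairing_le_opNormE A hy hx

/-- Scaling column `l` by `w l` amounts to replacing `x` by the shorter vector `w • x`. -/
lemma opNormE_mul_column_le {w : ℕ → ℂ} (hw : ∀ l, ‖w l‖ ≤ 1) (A : ℕ → ℕ → ℂ) :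
    opNormE (fun k l => w l * A k l) ≤ opNormE A :=
  opNormE_le fun x y hx hy => by
    have hwx_apply (l : ℕ) : (w • x) l = w l * x l := rfl
    have hsupp : (w • x).support ⊆ x.support := fun l hl => by
      rw [Finsupp.mem_support_iff, hwx_apply] at hl
      exact Finsupp.mem_support_iff.2 (right_ne_zero_of_mul hl)
    have hwx : ∑ l ∈ (w • x).support, ‖(w • x) l‖ ^ 2 ≤ 1 := by
      refine le_trans (sum_le_sum_of_subset_of_nonneg hsupp fun _ _ _ => by positivity) ?_
      refine le_trans (sum_le_sum fun l _ => ?_) hx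
      rw [hwx_apply, norm_mul]
      gcongr
      exact mul_le_of_le_one_left (norm_nonneg _) (hw l)
    have hpair : matPairing (fun k l => w l * A k l) x y = matPairing A (w • x) y := by
      refine sum_congr rfl fun k _ => (sum_congr rfl fun l _ => ?_).trans
        (sum_subset hsupp fun l _ hl => ?_).symm
      · rw [hwx_apply]
        ring
      · rw [Finsupp.notMem_support_iff.1 hl, mul_zero]
    rw [hpair]
    exact ofReal_norm_matPairing_le_opNormE A hwx hy

lemma deltaK_iterate_apply (A : ℕ → ℕ → ℂ) (j k l : ℕ) :
    deltaK^[j] A k l = ((k : ℂ) - l) ^ j * A k l := by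
  induction j with
  | zero => simp
  | succ j ih =>
    rw [Function.iterate_succ_apply', deltaK, ih]
    ring

lemma deltaK_iterate_matAdjoint (A : ℕ → ℕ → ℂ) (j : ℕ) :
    deltaK^[j] (matAdjoint A) = (-1 : ℂ) ^ j • matAdjoint (deltaK^[j] A) := by
  ext k l
  simp only [deltaK_iterate_apply, Pi.smul_apply, matAdjoint,
    map_mul, map_pow, map_sub, Complex.conj_natCast, smul_eq_mul]
  rw [← mul_assoc, ← mul_pow]
  ring

lemma norm0N_smul_le (c : ℂ) (A : ℕ → ℕ → ℂ) (N : ℕ) :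
    norm0N (c • A) N ≤ ‖c‖ₑ * norm0N A N := by
  have : wt N (c • A) = c • wt N A := by
    ext k l
    simp only [wt, Pi.smul_apply, smul_eq_mul]
    ring
  rw [norm0N, norm0N, this]
  exact opNormE_smul_le c _

lemma one_le_norm_one_add_natCast (l : ℕ) : 1 ≤ ‖1 + (l : ℂ)‖ := by
  rw [show 1 + (l : ℂ) = ((1 + l : ℕ) : ℂ) by push_cast; rfl, Complex.norm_natCast]
  exact_mod_cast Nat.le_add_right 1 l

lemma norm0N_matAdjoint_le (A : ℕ → ℕ → ℂ) (N : ℕ) :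
    norm0N (matAdjoint A) N ≤
      ∑ i ∈ range (N + 1), (N.choose i : ℝ≥0∞) * norm0N (deltaK^[i] A) N := by
  set rowWt : ℕ → ℕ → ℂ := fun k l => (1 + (k : ℂ)) ^ N * A k l
  have hne (l : ℕ) : (1 + (l : ℂ)) ≠ 0 :=
    norm_pos_iff.1 (one_pos.trans_le (one_le_norm_one_add_natCast l))
  have hwt : wt N (matAdjoint A) = matAdjoint rowWt := by
    ext k l
    simp [wt, rowWt, matAdjoint]
  have hrow : rowWt = ∑ i ∈ range (N + 1),
      (N.choose i : ℂ) • fun (k l : ℕ) => ((1 + (l : ℂ)) ^ i)⁻¹ * wt N (deltaK^[i] A) k l := by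
    ext k l
    simp only [rowWt, Finset.sum_apply, Pi.smul_apply, smul_eq_mul, wt,
      deltaK_iterate_apply]
    rw [show 1 + (k : ℂ) = (k - l) + (1 + l) by ring, add_pow, sum_mul]
    refine sum_congr rfl fun i hi => ?_
    rw [pow_sub₀ _ (hne l) (Nat.lt_succ_iff.1 (mem_range.1 hi))]
    ring
  calc norm0N (matAdjoint A) N = opNormE (matAdjoint rowWt) := by rw [norm0N, hwt]
    _ ≤ opNormE rowWt := opNormE_matAdjoint_le rowWt
    _ ≤ ∑ i ∈ range (N + 1), ‖(N.choose i : ℂ)‖ₑ *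
          opNormE fun (k l : ℕ) => ((1 + (l : ℂ)) ^ i)⁻¹ * wt N (deltaK^[i] A) k l := by
      rw [hrow]
      exact (opNormE_sum_le _ _).trans (sum_le_sum fun i _ => opNormE_smul_le _ _)
    _ ≤ ∑ i ∈ range (N + 1), (N.choose i : ℝ≥0∞) * norm0N (deltaK^[i] A) N := by
      refine sum_le_sum fun i _ => ?_
      rw [← ofReal_norm, Complex.norm_natCast, ENNReal.ofReal_natCast]
      gcongr
      refine opNormE_mul_column_le (fun l => ?_) _
      rw [norm_inv, norm_pow]
      exact inv_le_one_of_one_le₀ (one_le_pow₀ (one_le_norm_one_add_natCast l))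

lemma norm0N_deltaK_iterate_matAdjoint_le (A : ℕ → ℕ → ℂ) (N j : ℕ) :
    norm0N (deltaK^[j] (matAdjoint A)) N ≤
      ∑ i ∈ range (N + 1), (N.choose i : ℝ≥0∞) * norm0N (deltaK^[i + j] A) N := by
  calc
    norm0N (deltaK^[j] (matAdjoint A)) N
        ≤ ‖(-1 : ℂ) ^ j‖ₑ * norm0N (matAdjoint (deltaK^[j] A)) N := by
      rw [deltaK_iterate_matAdjoint]
      exact norm0N_smul_le _ _ N
    _ = norm0N (matAdjoint (deltaK^[j] A)) N := by simp
    _ ≤ _ := by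
      simpa only [Function.iterate_add_apply] using norm0N_matAdjoint_le (deltaK^[j] A) N

theorem sum_choose_mul_sum_choose_mul {R : Type*} [CommSemiring R] (T : ℕ → R) (M N : ℕ) :
    ∑ j ∈ range (M + 1), (M.choose j : R) *
        ∑ i ∈ range (N + 1), (N.choose i : R) * T (i + j) =
      ∑ m ∈ range (M + N + 1), ((M + N).choose m : R) * T m := by
  set s := range (M + 1) ×ˢ range (N + 1)
  have hfiber (m : ℕ) :
      ∑ p ∈ s with p.1 + p.2 = m, M.choose p.1 * N.choose p.2 = (M + N).choose m := by
    rw [Nat.add_choose_eq]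
    refine sum_subset (fun p hp => mem_antidiagonal.2 (mem_filter.1 hp).2)
      fun p hp hps => ?_
    have hp := mem_antidiagonal.1 hp
    simp only [s, mem_filter, mem_product, mem_range, hp, and_true, not_and_or, not_lt] at hps
    rcases hps with h | h
    · rw [Nat.choose_eq_zero_of_lt h, zero_mul]
    · rw [Nat.choose_eq_zero_of_lt h, mul_zero]
  calc _ = ∑ p ∈ s, (M.choose p.1 * N.choose p.2 : R) * T (p.1 + p.2) := by
        rw [sum_product]
        refine sum_congr rfl fun j _ => ?_
        rw [mul_sum]
        exact sum_congr rfl fun i _ => by rw [add_comm j]; ring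
    _ = ∑ m ∈ range (M + N + 1), ∑ p ∈ s with p.1 + p.2 = m,
          (M.choose p.1 * N.choose p.2 : R) * T (p.1 + p.2) := by
      refine (sum_fiberwise_of_maps_to (fun p hp => ?_) _).symm
      simp only [s, mem_product, mem_range] at hp ⊢
      omega
    _ = _ := sum_congr rfl fun m _ => by
      rw [← hfiber m, Nat.cast_sum, sum_mul]
      refine sum_congr rfl fun p hp => ?_
      rw [(mem_filter.1 hp).2, Nat.cast_mul]

lemma matA_adjoint (a : H →L[ℂ] H) :
    matA (ContinuousLinearMap.adjoint a) = matAdjoint (matA a) := by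
  ext k l
  rw [matA, matAdjoint, matA, ContinuousLinearMap.adjoint_inner_right, inner_conj_symm]

/-- The adjoint satisfies `‖a*‖_{M,N} ≤ ‖a‖_{M+N,N}`. -/
theorem stmt5 (a : H →L[ℂ] H) (M N : ℕ) :
    normMN (matA (ContinuousLinearMap.adjoint a)) M N ≤ normMN (matA a) (M + N) N := by
  rw [normMN, normMN, matA_adjoint, ← sum_choose_mul_sum_choose_mul]
  gcongr with j
  exact norm0N_deltaK_iterate_matAdjoint_le (matA a) N j

end
end

section
/- If c ∈ K^∞ is self-adjoint, then ‖(e^{ic} − I)(I+K)^N‖ ≤ ‖c(I+K)^N‖ for every nonnegative integer N. -/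
/-!
Since `c` is self-adjoint, `e^{ic} - 1 = d c` with `d = i ∫₀¹ e^{itc} dt`, an average of unitaries
and hence a contraction. Left multiplication by a contraction `d` does not increase
`‖a (I+K)^N‖`: a matrix pairing `⟪y, d a (I+K)^N x⟫` equals `⟪d* y, a (I+K)^N x⟫`, and `d* y` is
again in the unit ball, so it is a limit of finitely supported test vectors of norm at most one.
-/
open scoped ENNReal ComplexConjugate InnerProductSpace

noncomputable section

open NormedSpace in
theorem exp_sub_one_eq_integral_exp_smul_mul {A : Type*} [NormedRing A] [NormedAlgebra ℝ A]
    [CompleteSpace A] (x : A) :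
    exp x - 1 = (∫ t in (0 : ℝ)..1, exp (t • x)) * x := by
  have hderiv (t : ℝ) := hasDerivAt_exp_smul_const x t
  have hcont : Continuous fun t : ℝ => exp (t • x) :=
    continuous_iff_continuousAt.2 fun t => (hderiv t).continuousAt
  have hFTC : ∫ t in (0 : ℝ)..1, exp (t • x) * x = exp ((1 : ℝ) • x) - exp ((0 : ℝ) • x) :=
    intervalIntegral.integral_eq_sub_of_hasDerivAt (fun t _ => hderiv t)
      ((hcont.mul continuous_const).intervalIntegrable 0 1)
  rw [one_smul, zero_smul, exp_zero] at hFTC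
  rw [← hFTC]
  exact ((ContinuousLinearMap.mul ℝ A).flip x).intervalIntegral_comp_comm
    (hcont.intervalIntegrable 0 1)

theorem IsSelfAdjoint.exists_norm_le_one_exp_I_smul_sub_one_eq_mul {A : Type*} [NormedRing A]
    [NormedAlgebra ℂ A] [CompleteSpace A] [StarRing A] [CStarRing A] [StarModule ℂ A]
    {c : A} (hc : IsSelfAdjoint c) :
    ∃ d : A, ‖d‖ ≤ 1 ∧ NormedSpace.exp (Complex.I • c) - 1 = d * c := by
  rcases subsingleton_or_nontrivial A with _ | _
  · exact ⟨0, by simp, Subsingleton.elim _ _⟩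
  let : NormedAlgebra ℚ A := NormedAlgebra.restrictScalars ℚ ℂ A
  have hunitary (t : ℝ) : NormedSpace.exp (t • Complex.I • c) ∈ unitary A := by
    apply NormedSpace.exp_mem_unitary_of_mem_skewAdjoint
    rw [skewAdjoint.mem_iff, ← Complex.coe_smul, star_smul, star_smul, hc.star_eq]
    simp
  refine ⟨Complex.I • ∫ t in (0 : ℝ)..1, NormedSpace.exp (t • Complex.I • c), ?_, ?_⟩
  · rw [norm_smul, Complex.norm_I, one_mul]
    simpa using intervalIntegral.norm_integral_le_of_norm_le_const (a := 0) (b := 1) (C := 1)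
      fun t _ => (CStarRing.norm_of_mem_unitary (hunitary t)).le
  · rw [exp_sub_one_eq_integral_exp_smul_mul, mul_smul_comm, smul_mul_assoc]

theorem inner_e_left (f : H) (k : ℕ) : ⟪e k, f⟫_ℂ = f k := by
  rw [e, lp.inner_single_left, RCLike.inner_apply, map_one, mul_one]

theorem orthonormal_e : Orthonormal ℂ e := by
  rw [orthonormal_iff_ite]
  intro i j
  rw [inner_e_left, e, lp.single_apply]
  split_ifs <;> simp_all

theorem norm_sum_smul_e_sq (t : Finset ℕ) (y : ℕ → ℂ) :
    ‖∑ k ∈ t, y k • e k‖ ^ 2 = ∑ k ∈ t, ‖y k‖ ^ 2 := by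
  simpa using orthonormal_e.orthogonalFamily.norm_sum y t

theorem sum_sum_conj_mul_wt_matA_mul (b : H →L[ℂ] H) (N : ℕ) (s t : Finset ℕ) (x y : ℕ → ℂ) :
    ∑ k ∈ t, ∑ l ∈ s, conj (y k) * wt N (matA b) k l * x l
      = ⟪∑ k ∈ t, y k • e k, b (∑ l ∈ s, ((1 + l : ℂ) ^ N * x l) • e l)⟫_ℂ := by
  rw [sum_inner]
  refine Finset.sum_congr rfl fun k _ => ?_
  rw [inner_smul_left, map_sum, inner_sum, Finset.mul_sum]
  refine Finset.sum_congr rfl fun l _ => ?_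
  rw [map_smul, inner_smul_right, wt, matA]
  ring

theorem ofReal_norm_sum_sum_le_opNormE (A : ℕ → ℕ → ℂ) (s t : Finset ℕ) (x y : ℕ → ℂ)
    (hx : ∑ l ∈ s, ‖x l‖ ^ 2 ≤ 1) (hy : ∑ k ∈ t, ‖y k‖ ^ 2 ≤ 1) :
    ENNReal.ofReal ‖∑ k ∈ t, ∑ l ∈ s, conj (y k) * A k l * x l‖ ≤ opNormE A := by
  set x' := Finsupp.indicator s fun l _ => x l
  set y' := Finsupp.indicator t fun k _ => y k
  have hx' : ∑ l ∈ x'.support, ‖x' l‖ ^ 2 ≤ 1 :=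
    (Finsupp.sum_indicator_index (h := fun _ a => ‖a‖ ^ 2) x (by simp)).trans_le hx
  have hy' : ∑ k ∈ y'.support, ‖y' k‖ ^ 2 ≤ 1 :=
    (Finsupp.sum_indicator_index (h := fun _ a => ‖a‖ ^ 2) y (by simp)).trans_le hy
  have hpair : ∑ k ∈ y'.support, ∑ l ∈ x'.support, conj (y' k) * A k l * x' l
      = ∑ k ∈ t, ∑ l ∈ s, conj (y k) * A k l * x l := by
    change y'.sum (fun k b => x'.sum fun l a => conj b * A k l * a) = _
    rw [Finsupp.sum_indicator_index _ (by simp)]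
    refine Finset.sum_congr rfl fun k _ => ?_
    exact Finsupp.sum_indicator_index _ (by simp)
  rw [← hpair]
  exact le_iSup_of_le x' <| le_iSup_of_le y' <| le_iSup_of_le hx' <| le_iSup_of_le hy' le_rfl

theorem ofReal_norm_inner_le_opNormE_wt (a : H →L[ℂ] H) (N : ℕ) (s : Finset ℕ) (x : ℕ → ℂ)
    (hx : ∑ l ∈ s, ‖x l‖ ^ 2 ≤ 1) {z : H} (hz : ‖z‖ ≤ 1) :
    ENNReal.ofReal ‖⟪z, a (∑ l ∈ s, ((1 + l : ℂ) ^ N * x l) • e l)⟫_ℂ‖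
      ≤ opNormE (wt N (matA a)) := by
  set v := a (∑ l ∈ s, ((1 + l : ℂ) ^ N * x l) • e l)
  have hz_sum : HasSum (fun k => z k • e k) z := by
    convert lp.hasSum_single (p := 2) ENNReal.ofNat_ne_top z using 2 with k
    rw [e, ← lp.single_smul, smul_eq_mul, mul_one]
  have hlim : Filter.Tendsto (fun F : Finset ℕ => ENNReal.ofReal ‖⟪∑ k ∈ F, z k • e k, v⟫_ℂ‖)
      Filter.atTop (nhds (ENNReal.ofReal ‖⟪z, v⟫_ℂ‖)) :=
    (ENNReal.continuous_ofReal.tendsto _).comp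
      ((Filter.Tendsto.inner hz_sum tendsto_const_nhds).norm)
  refine le_of_tendsto' hlim fun F => ?_
  have hF : ∑ k ∈ F, ‖z k‖ ^ 2 ≤ 1 := calc
    ∑ k ∈ F, ‖z k‖ ^ 2 = ∑ k ∈ F, ‖⟪e k, z⟫_ℂ‖ ^ 2 := by simp only [inner_e_left]
    _ ≤ ‖z‖ ^ 2 := orthonormal_e.sum_inner_products_le z
    _ ≤ 1 := pow_le_one₀ (norm_nonneg z) hz
  rw [← sum_sum_conj_mul_wt_matA_mul]
  exact ofReal_norm_sum_sum_le_opNormE _ s F x z hx hF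

theorem norm0N_matA_mul_le {d : H →L[ℂ] H} (hd : ‖d‖ ≤ 1) (a : H →L[ℂ] H) (N : ℕ) :
    norm0N (matA (d * a)) N ≤ norm0N (matA a) N := by
  refine iSup_le fun x => iSup_le fun y => iSup_le fun hx => iSup_le fun hy => ?_
  have hY : ‖∑ k ∈ y.support, y k • e k‖ ≤ 1 := by
    rw [← sq_le_one_iff₀ (norm_nonneg _), norm_sum_smul_e_sq]
    exact hy
  rw [sum_sum_conj_mul_wt_matA_mul, mul_apply_eq_comp,
    ← ContinuousLinearMap.adjoint_inner_left]
  refine ofReal_norm_inner_le_opNormE_wt a N _ x hx ?_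
  calc ‖d.adjoint (∑ k ∈ y.support, y k • e k)‖
      ≤ ‖d.adjoint‖ * ‖∑ k ∈ y.support, y k • e k‖ := d.adjoint.le_opNorm _
    _ ≤ 1 * 1 := by rw [ContinuousLinearMap.adjoint.norm_map]; gcongr
    _ = 1 := one_mul 1

theorem stmt9_general (c : H →L[ℂ] H) (hsa : IsSelfAdjoint c) (N : ℕ) :
    norm0N (matA (NormedSpace.exp (Complex.I • c) - 1)) N ≤ norm0N (matA c) N := by
  obtain ⟨d, hd, hfactor⟩ :=
    IsSelfAdjoint.exists_norm_le_one_exp_I_smul_sub_one_eq_mul (c := c) hsa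
  rw [hfactor]
  exact norm0N_matA_mul_le hd c N

/-- For a self-adjoint smooth compact operator `c`:
`‖(e^{ic} - I)(I+K)^N‖ ≤ ‖c(I+K)^N‖`. -/
theorem stmt9 (c : H →L[ℂ] H) (hc : IsRD (matA c)) (hsa : IsSelfAdjoint c) (N : ℕ) :
    norm0N (matA (NormedSpace.exp (Complex.I • c) - 1)) N ≤ norm0N (matA c) N :=
  stmt9_general c hsa N

end
end
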